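/- Let ψ = (a, 1-a) and φ = (b, 1-b) with 1/2 < a < b ≤ 1, and let χ = (p, 1-p) with 1/2 < p < 1. Then ψ ⊗ χ ≺ φ ⊗ (1/2, 1/2) holds if and only if p ≤ b/(2a). -/

import Mathlib

open Finset

/-- `eSum v m` is the sum of the `m` largest entries of `v`
(the supremum of sums over subsets of cardinality `m`). -/
noncomputable def eSum {ι : Type} [Fintype ι] (v : ι → ℝ) (m : ℕ) : ℝ :=
  sSup {x | ∃ s : Finset ι, s.card = m ∧ x = ∑ i ∈ s, v i}

/-- Majorization `x ≺ y`: partial sums of largest entries of `x` are dominated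
by those of `y`, with equal total sums. -/
def Maj {ι κ : Type} [Fintype ι] [Fintype κ] (x : ι → ℝ) (y : κ → ℝ) : Prop :=
  (∀ m : ℕ, 1 ≤ m → m < Fintype.card ι → eSum x m ≤ eSum y m) ∧
    ∑ i, x i = ∑ j, y j

/-- Strict majorization `x ◁ y`: all inequalities strict, total sums equal. -/
def SMaj {ι κ : Type} [Fintype ι] [Fintype κ] (x : ι → ℝ) (y : κ → ℝ) : Prop :=
  (∀ m : ℕ, 1 ≤ m → m < Fintype.card ι → eSum x m < eSum y m) ∧
    ∑ i, x i = ∑ j, y j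

/-- Global uniformity: smallest entry divided by largest entry. -/
noncomputable def gu {ι : Type} [Fintype ι] (v : ι → ℝ) : ℝ :=
  sInf (Set.range v) / sSup (Set.range v)

/-- The set of ratios `v b / v a` over consecutive distinct values `v b < v a`
(no value strictly in between). -/
def ratioSet {ι : Type} [Fintype ι] (v : ι → ℝ) : Set ℝ :=
  {r | ∃ a b : ι, v b < v a ∧ (¬ ∃ c : ι, v b < v c ∧ v c < v a) ∧ r = v b / v a}

open Classical in
noncomputable def lu {ι : Type} [Fintype ι] (v : ι → ℝ) : ℝ :=
  if (∃ a b : ι, v a ≠ v b) then sInf (ratioSet v) else 1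

open Classical in
/-- Maximal local uniformity: maximum ratio of consecutive distinct values;
`1` for a constant vector. -/
noncomputable def Lu {ι : Type} [Fintype ι] (v : ι → ℝ) : ℝ :=
  if (∃ a b : ι, v a ≠ v b) then sSup (ratioSet v) else 1

/-- Tensor (Kronecker) product of two vectors. -/
def tens {ι κ : Type} (x : ι → ℝ) (y : κ → ℝ) : ι × κ → ℝ :=
  fun p => x p.1 * y p.2

/-- `k`-fold tensor power of a vector. -/
def tpow {n : ℕ} (v : Fin n → ℝ) (k : ℕ) : (Fin k → Fin n) → ℝ :=
  fun f => ∏ i, v (f i)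

/-- A probability vector: nonnegative entries summing to one. -/
def IsProb {ι : Type} [Fintype ι] (v : ι → ℝ) : Prop :=
  (∀ i, 0 ≤ v i) ∧ ∑ i, v i = 1

/-- `v` sorted in non-increasing order. -/
noncomputable def sortDesc {n : ℕ} (v : Fin n → ℝ) : Fin n → ℝ :=
  fun i => v (Tuple.sort v i.rev)

/-- Shannon entropy (base 2), with the convention `0 log 0 = 0`. -/
noncomputable def entH {ι : Type} [Fintype ι] (v : ι → ℝ) : ℝ :=
  -∑ i, v i * Real.logb 2 (v i)


/-! Write `x = ψ ⊗ χ` and `y = φ ⊗ (1/2, 1/2)`. The largest entry of `x` is `a p` and that of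
`y` is `b / 2`, so the first majorization inequality is exactly `2 a p ≤ b`. Conversely, if
`2 a p ≤ b` then every entry of `x` is at most `b / 2`, which settles `m = 1, 2`, and every entry
is at least `(1 - a)(1 - p) ≥ (1 - b) / 2`, which settles `m = 3` by passing to complements. -/

section eSum

variable {ι : Type} [Fintype ι] (v : ι → ℝ)

lemma sum_le_eSum {m : ℕ} {s : Finset ι} (hs : s.card = m) : ∑ i ∈ s, v i ≤ eSum v m := by
  refine le_csSup ?_ ⟨s, hs, rfl⟩
  refine ((univ.powersetCard m).image fun s => ∑ i ∈ s, v i).finite_toSet.bddAbove.mono ?_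
  rintro _ ⟨t, ht, rfl⟩
  simpa using ⟨t, ht, rfl⟩

lemma eSum_le {m : ℕ} {c : ℝ} (hm : m ≤ Fintype.card ι)
    (h : ∀ s : Finset ι, s.card = m → ∑ i ∈ s, v i ≤ c) : eSum v m ≤ c := by
  obtain ⟨s, -, hs⟩ := exists_subset_card_eq (s := (univ : Finset ι)) (by simpa using hm)
  refine csSup_le ⟨_, s, hs, rfl⟩ ?_
  rintro _ ⟨t, ht, rfl⟩
  exact h t ht

lemma eSum_le_mul {m : ℕ} {c : ℝ} (hm : m ≤ Fintype.card ι) (h : ∀ i, v i ≤ c) :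
    eSum v m ≤ m * c :=
  eSum_le v hm fun s hs => by
    simpa [hs] using s.sum_le_card_nsmul v c fun i _ => h i

lemma eSum_le_sum_sub [DecidableEq ι] {m : ℕ} {c : ℝ} (hm : m ≤ Fintype.card ι)
    (h : ∀ i, c ≤ v i) :
    eSum v m ≤ ∑ i, v i - (Fintype.card ι - m) * c :=
  eSum_le v hm fun s hs => by
    have hcompl : ((Fintype.card ι : ℝ) - m) * c ≤ ∑ i ∈ sᶜ, v i := by
      simpa [card_compl, hs, Nat.cast_sub hm] using sᶜ.card_nsmul_le_sum v c fun i _ => h i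
    linarith [sum_compl_add_sum s v]

lemma sum_sub_le_eSum [DecidableEq ι] (j : ι) :
    ∑ i, v i - v j ≤ eSum v (Fintype.card ι - 1) := by
  have hsum := sum_compl_add_sum {j}ᶜ v
  rw [compl_compl, sum_singleton] at hsum
  have := sum_le_eSum v (s := {j}ᶜ) (by rw [card_compl, card_singleton])
  linarith

end eSum

section tens

variable {ι κ : Type} {x : ι → ℝ} {y : κ → ℝ} {c d : ℝ}

lemma tens_le_mul (hx : ∀ i, x i ≤ c) (hy : ∀ j, y j ≤ d) (hy0 : ∀ j, 0 ≤ y j) (hc : 0 ≤ c)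
    (k : ι × κ) : tens x y k ≤ c * d :=
  mul_le_mul (hx _) (hy _) (hy0 _) hc

lemma mul_le_tens (hx : ∀ i, c ≤ x i) (hy : ∀ j, d ≤ y j) (hc : 0 ≤ c) (hd : 0 ≤ d)
    (k : ι × κ) : c * d ≤ tens x y k :=
  mul_le_mul (hx _) (hy _) hd (hc.trans (hx _))

lemma sum_tens [Fintype ι] [Fintype κ] (x : ι → ℝ) (y : κ → ℝ) :
    ∑ k, tens x y k = (∑ i, x i) * ∑ j, y j := by
  rw [Fintype.sum_prod_type, Fintype.sum_mul_sum]
  rfl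

end tens

def twoPoint (a : ℝ) : Fin 2 → ℝ := fun i => if i = 0 then a else 1 - a

section twoPoint

variable {a : ℝ}

@[simp] lemma twoPoint_zero : twoPoint a 0 = a := rfl

@[simp] lemma twoPoint_one : twoPoint a 1 = 1 - a := rfl

lemma twoPoint_le (ha : 1 / 2 ≤ a) (i : Fin 2) : twoPoint a i ≤ a := by
  fin_cases i <;> simp; linarith

lemma sub_le_twoPoint (ha : 1 / 2 ≤ a) (i : Fin 2) : 1 - a ≤ twoPoint a i := by
  fin_cases i <;> simp; linarith

lemma twoPoint_nonneg (ha0 : 0 ≤ a) (ha1 : a ≤ 1) (i : Fin 2) : 0 ≤ twoPoint a i := by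
  fin_cases i <;> simp <;> linarith

end twoPoint

section bell

variable {a b p : ℝ}

lemma two_mul_mul_le_of_maj (hb : 1 / 2 ≤ b)
    (hmaj : Maj (tens (twoPoint a) (twoPoint p)) (tens (twoPoint b) fun _ : Fin 2 => (1 : ℝ) / 2)) :
    2 * a * p ≤ b := by
  have hx : a * p ≤ eSum (tens (twoPoint a) (twoPoint p)) 1 := by
    simpa [tens] using sum_le_eSum (tens (twoPoint a) (twoPoint p)) (s := {(0, 0)}) rfl
  have hy : eSum (tens (twoPoint b) fun _ : Fin 2 => (1 : ℝ) / 2) 1 ≤ b / 2 :=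
    (eSum_le_mul _ (by decide) <|
      tens_le_mul (twoPoint_le hb) (fun _ => le_rfl) (fun _ => by norm_num) (by linarith)).trans
      (by norm_num; linarith)
  linarith [hmaj.1 1 le_rfl (by decide)]

lemma maj_of_two_mul_mul_le (ha : 1 / 2 ≤ a) (hp : 1 / 2 ≤ p) (hb : b ≤ 1)
    (h : 2 * a * p ≤ b) :
    Maj (tens (twoPoint a) (twoPoint p)) (tens (twoPoint b) fun _ : Fin 2 => (1 : ℝ) / 2) := by
  set x := tens (twoPoint a) (twoPoint p)
  set y := tens (twoPoint b) fun _ : Fin 2 => (1 : ℝ) / 2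
  have ha1 : a ≤ 1 := by nlinarith
  have hp1 : p ≤ 1 := by nlinarith
  have hx_le : ∀ k, x k ≤ b / 2 := fun k =>
    (tens_le_mul (twoPoint_le ha) (twoPoint_le hp) (twoPoint_nonneg (by linarith) hp1)
      (by linarith) k).trans (by linarith)
  -- `2 (1 - a)(1 - p) - (1 - b) ≥ (2a - 1)(2p - 1) ≥ 0`
  have hx_ge : ∀ k, (1 - b) / 2 ≤ x k := fun k =>
    le_trans (by nlinarith [mul_nonneg (by linarith : 0 ≤ 2 * a - 1) (by linarith : 0 ≤ 2 * p - 1)])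
      (mul_le_tens (sub_le_twoPoint ha) (sub_le_twoPoint hp) (by linarith) (by linarith) k)
  have hsum_x : ∑ k, x k = 1 := by simp [x, sum_tens]
  have hsum_y : ∑ k, y k = 1 := by simp [y, sum_tens]
  refine ⟨fun m hm1 hm4 => ?_, hsum_x.trans hsum_y.symm⟩
  change m < 4 at hm4
  interval_cases m
  · calc eSum x 1 ≤ (1 : ℕ) * (b / 2) := eSum_le_mul x (by decide) hx_le
      _ = ∑ k ∈ {(0, 0)}, y k := by simp [y, tens]; ring
      _ ≤ eSum y 1 := sum_le_eSum y rfl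
  · calc eSum x 2 ≤ (2 : ℕ) * (b / 2) := eSum_le_mul x (by decide) hx_le
      _ = ∑ k ∈ {(0, 0), (0, 1)}, y k := by simp [y, tens]; ring
      _ ≤ eSum y 2 := sum_le_eSum y rfl
  · calc eSum x 3 ≤ 1 - (1 - b) / 2 :=
          (eSum_le_sum_sub x (by decide) hx_ge).trans_eq (by simp [hsum_x]; ring)
      _ = ∑ k, y k - y (1, 1) := by rw [hsum_y]; simp [y, tens]; ring
      _ ≤ eSum y 3 := sum_sub_le_eSum y (1, 1)

end bell

theorem bell_concentration_iff_general (a b p : ℝ)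
    (ha : 1 / 2 < a) (hab : a < b) (hb : b ≤ 1)
    (hp1 : 1 / 2 < p) :
    Maj (tens (fun i : Fin 2 => if i = 0 then a else 1 - a)
          (fun i : Fin 2 => if i = 0 then p else 1 - p))
        (tens (fun i : Fin 2 => if i = 0 then b else 1 - b)
          (fun _ : Fin 2 => (1 : ℝ) / 2)) ↔
      p ≤ b / (2 * a) := by
  rw [le_div_iff₀ (by linarith), mul_comm p]
  exact ⟨two_mul_mul_le_of_maj (by linarith),
    maj_of_two_mul_mul_le ha.le hp1.le hb⟩

/-- for `ψ = (a,1-a)`, `φ = (b,1-b)`, `χ = (p,1-p)` with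
`1/2 < a < b ≤ 1` and `1/2 < p < 1`, we have
`ψ ⊗ χ ≺ φ ⊗ (1/2,1/2)` iff `p ≤ b/(2a)`. -/
theorem bell_concentration_iff (a b p : ℝ)
    (ha : 1 / 2 < a) (hab : a < b) (hb : b ≤ 1)
    (hp1 : 1 / 2 < p) (hp2 : p < 1) :
    Maj (tens (fun i : Fin 2 => if i = 0 then a else 1 - a)
          (fun i : Fin 2 => if i = 0 then p else 1 - p))
        (tens (fun i : Fin 2 => if i = 0 then b else 1 - b)
          (fun _ : Fin 2 => (1 : ℝ) / 2)) ↔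
      p ≤ b / (2 * a) :=
  bell_concentration_iff_general a b p ha hab hb hp1
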